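/- Assume m₁ = 1 and m₂ = 0 (so that m₁+m₂ = 1 and ρ = 1/2). There exists a constant C > 0 such that for every λ ∈ ℂ with Im λ > 0 and every t ∈ (0, 1/2], |b_λ(t)| ≤ C log(1/t). -/

import Mathlib

open Complex MeasureTheory Set

noncomputable section

/-- Gauss hypergeometric function ₂F₁ as a power series sum. -/
def hyp (a b c x : ℂ) : ℂ :=
  ∑' n : ℕ, (ascPochhammer ℂ n).eval a * (ascPochhammer ℂ n).eval b /
    ((ascPochhammer ℂ n).eval c * (n.factorial : ℂ)) * x ^ n

/-- ρ = (m₁ + 2 m₂)/2 -/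
def rho (m₁ m₂ : ℕ) : ℝ := ((m₁ : ℝ) + 2 * m₂) / 2

/-- Δ(t) = (2 sinh t)^(m₁+m₂) (2 cosh t)^(m₂) -/
def Del (m₁ m₂ : ℕ) (t : ℝ) : ℝ :=
  (2 * Real.sinh t) ^ (m₁ + m₂) * (2 * Real.cosh t) ^ m₂

/-- The solution Φ_λ. -/
def Phi (m₁ m₂ : ℕ) (l : ℂ) (t : ℝ) : ℂ :=
  ((2 * Real.cosh t : ℝ) : ℂ) ^ (Complex.I * l - (rho m₁ m₂ : ℂ)) *
    hyp (((rho m₁ m₂ : ℂ) - Complex.I * l) / 2) (((m₁ : ℂ) + 2) / 4 - Complex.I * l / 2)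
      (1 - Complex.I * l) ((((Real.cosh t) ^ 2 : ℝ) : ℂ))⁻¹

/-- The function b_λ. -/
def bfun (m₁ m₂ : ℕ) (l : ℂ) (t : ℝ) : ℂ :=
  (2 : ℂ) ^ (-(rho m₁ m₂ : ℂ) - 1 - Complex.I * l) *
    (Complex.Gamma (((rho m₁ m₂ : ℂ) - Complex.I * l) / 2) *
      Complex.Gamma (((m₁ : ℂ) + 2) / 4 - Complex.I * l / 2) /
      (Complex.Gamma (((m₁ : ℂ) + (m₂ : ℂ) + 1) / 2) * Complex.Gamma (1 - Complex.I * l))) *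
    Phi m₁ m₂ l t

/-!
For `m₁ = 1`, `m₂ = 0` put `a = (1/2 - iλ)/2`, `b = 3/4 - iλ/2`, so that `c = 1 - iλ = a + b`.
Expanding `(1 - xs)^(-a)` in the binomial series and integrating termwise against Beta integrals
gives Euler's representation
`Γ(a)Γ(b)/Γ(a+b) · ₂F₁(a, b; a+b; x) = ∫₀¹ s^(b-1) (1-s)^(a-1) (1-xs)^(-a) ds`.
As `Re a ≥ 1/4` and `Re b ≥ 3/4`, the integrand is dominated by
`s^(-1/4) (1-s)^(-3/4) (1-xs)^(-1/4)`, whose integral over `[0,1]` is `O(1 + log (1/(1-x)))`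
(split at `1/2` and at `x`). For `x = cosh⁻² t` we have `1 - x = tanh² t ≥ t²/4`, and the
prefactor `2^(-3/2-iλ) (2 cosh t)^(iλ-1/2)` has modulus at most `1` when `Im λ > 0`.
-/

open scoped Interval

theorem Ring.choose_add_natCast_sub_one {R : Type*} [Field R] [CharZero R] (a : R) (n : ℕ) :
    Ring.choose (a + n - 1) n = (ascPochhammer R n).eval a / n.factorial := by
  rw [Ring.choose_eq_smul, Polynomial.descPochhammer_smeval_eq_ascPochhammer,
    Polynomial.ascPochhammer_smeval_cast, Polynomial.ascPochhammer_smeval_eq_eval, smul_eq_mul,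
    div_eq_inv_mul]
  ring_nf

theorem hasFPowerSeriesOnBall_one_sub_cpow_neg (a : ℂ) :
    HasFPowerSeriesOnBall (fun z ↦ (1 - z) ^ (-a))
      (.ofScalars ℂ fun n ↦ (ascPochhammer ℂ n).eval a / n.factorial) 0 1 := by
  simpa [← Ring.choose_add_natCast_sub_one, cpow_neg, one_div]
    using one_div_one_sub_cpow_hasFPowerSeriesOnBall_zero a

theorem hasSum_ascPochhammer_div_factorial_mul_pow (a : ℂ) {z : ℂ} (hz : ‖z‖ < 1) :
    HasSum (fun n ↦ (ascPochhammer ℂ n).eval a / n.factorial * z ^ n) ((1 - z) ^ (-a)) := by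
  have := (hasFPowerSeriesOnBall_one_sub_cpow_neg a).hasSum
    (y := z) (by simpa [Metric.eball, ← ofReal_norm] using hz)
  simpa [FormalMultilinearSeries.ofScalars_apply_eq, mul_comm] using this

theorem summable_norm_ascPochhammer_div_factorial_mul_pow (a : ℂ) {r : ℝ} (hr0 : 0 ≤ r)
    (hr : r < 1) :
    Summable (fun n ↦ ‖(ascPochhammer ℂ n).eval a / n.factorial‖ * r ^ n) := by
  lift r to NNReal using hr0
  have := FormalMultilinearSeries.summable_norm_mul_pow _
    (lt_of_lt_of_le (by exact_mod_cast hr) (hasFPowerSeriesOnBall_one_sub_cpow_neg a).r_le)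
  simpa using this

namespace Complex

theorem Gamma_add_nat_eq {z : ℂ} (hz : 0 < z.re) (n : ℕ) :
    Gamma (z + n) = (ascPochhammer ℂ n).eval z * Gamma z := by
  rw [← Gamma_add_nat_div_Gamma_eq z, div_mul_cancel₀ _ (Gamma_ne_zero_of_re_pos hz)]
  rintro k rfl
  have : (0 : ℝ) ≤ k := k.cast_nonneg
  simp at hz
  linarith

theorem Gamma_mul_Gamma_div_Gamma_mul_ascPochhammer (a : ℂ) {b c : ℂ} (hb : 0 < b.re)
    (hcb : 0 < (c - b).re) (n : ℕ) :
    Gamma b * Gamma (c - b) / Gamma c *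
        ((ascPochhammer ℂ n).eval a * (ascPochhammer ℂ n).eval b /
          ((ascPochhammer ℂ n).eval c * n.factorial)) =
      (ascPochhammer ℂ n).eval a / n.factorial * betaIntegral (b + n) (c - b) := by
  have hbn : 0 < (b + n).re := by simp; positivity
  have hc : 0 < c.re := by simpa using add_pos hb hcb
  have hcn : Gamma (c + n) ≠ 0 := Gamma_ne_zero_of_re_pos (by simp; positivity)
  have hbeta := Gamma_mul_Gamma_eq_betaIntegral hbn hcb
  rw [show b + n + (c - b) = c + n by ring, Gamma_add_nat_eq hb, Gamma_add_nat_eq hc] at hbeta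
  rw [Gamma_add_nat_eq hc] at hcn
  obtain ⟨hPc, hGc⟩ := mul_ne_zero_iff.mp hcn
  have hfac : (n.factorial : ℂ) ≠ 0 := by exact_mod_cast n.factorial_ne_zero
  field_simp
  linear_combination (ascPochhammer ℂ n).eval a * hbeta

theorem cpow_add_natCast_sub_one {s : ℂ} (hs : s ≠ 0) (b : ℂ) (n : ℕ) :
    s ^ (b + n - 1) = s ^ (b - 1) * s ^ n := by
  rw [← cpow_natCast, ← cpow_add _ _ hs]
  ring_nf

end Complex

theorem hasSum_betaIntegral_mul_binomial (a : ℂ) {b d : ℂ} (hb : 0 < b.re) (hd : 0 < d.re)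
    {x : ℂ} (hx : ‖x‖ < 1) :
    HasSum (fun n : ℕ ↦ (ascPochhammer ℂ n).eval a / n.factorial * x ^ n * betaIntegral (b + n) d)
      (∫ s in (0 : ℝ)..1, (s : ℂ) ^ (b - 1) * (1 - (s : ℂ)) ^ (d - 1) * (1 - x * s) ^ (-a)) := by
  set coeff : ℕ → ℂ := fun n ↦ (ascPochhammer ℂ n).eval a / n.factorial
  set β : ℝ → ℂ := fun s ↦ (s : ℂ) ^ (b - 1) * (1 - (s : ℂ)) ^ (d - 1)
  set F : ℕ → ℝ → ℂ := fun n s ↦ coeff n * x ^ n * ((s : ℂ) ^ (b + n - 1) * (1 - (s : ℂ)) ^ (d - 1))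
  have hF : ∀ s ∈ Ι (0 : ℝ) 1, ∀ n, F n s = β s * (coeff n * (x * s) ^ n) := by
    intro s hs n
    rw [uIoc_of_le zero_le_one] at hs
    simp only [F, β, cpow_add_natCast_sub_one (ofReal_ne_zero.mpr hs.1.ne'), mul_pow]
    ring
  have hxs : ∀ s ∈ Ι (0 : ℝ) 1, ‖x‖ * ‖(s : ℂ)‖ ≤ ‖x‖ := fun s hs ↦ by
    rw [uIoc_of_le zero_le_one] at hs
    rw [norm_real, Real.norm_of_nonneg hs.1.le]
    exact mul_le_of_le_one_right (norm_nonneg x) hs.2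
  have hβ := betaIntegral_convergent hb hd
  have hsum := intervalIntegral.hasSum_integral_of_dominated_convergence (F := F)
    (f := fun s ↦ β s * (1 - x * s) ^ (-a)) (fun n s ↦ ‖coeff n‖ * ‖x‖ ^ n * ‖β s‖)
    (fun n ↦ (intervalIntegrable_iff.mp ((betaIntegral_convergent (u := b + n)
      (by simp; positivity) hd).const_mul (coeff n * x ^ n))).aestronglyMeasurable)
    (fun n ↦ Filter.Eventually.of_forall fun s hs ↦ by
      rw [hF s hs n, norm_mul (β s), norm_mul (coeff n), norm_pow, norm_mul x, mul_comm]
      gcongr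
      exact hxs s hs)
    (Filter.Eventually.of_forall fun s _ ↦
      (summable_norm_ascPochhammer_div_factorial_mul_pow a (norm_nonneg x) hx).mul_right _)
    (by simp_rw [tsum_mul_right]; exact hβ.norm.const_mul _)
    (Filter.Eventually.of_forall fun s hs ↦ by
      simp_rw [hF s hs]
      exact (hasSum_ascPochhammer_div_factorial_mul_pow a
        ((norm_mul x _).trans_le (hxs s hs) |>.trans_lt hx)).mul_left (β s))
  simpa only [F, intervalIntegral.integral_const_mul, betaIntegral, add_sub_right_comm] using hsum

theorem Gamma_mul_Gamma_div_Gamma_mul_hyp_eq_integral (a : ℂ) {b c : ℂ} (hb : 0 < b.re)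
    (hcb : 0 < (c - b).re) {x : ℂ} (hx : ‖x‖ < 1) :
    Gamma b * Gamma (c - b) / Gamma c * hyp a b c x =
      ∫ s in (0 : ℝ)..1, (s : ℂ) ^ (b - 1) * (1 - (s : ℂ)) ^ (c - b - 1) * (1 - x * s) ^ (-a) := by
  rw [hyp, ← tsum_mul_left, ← (hasSum_betaIntegral_mul_binomial a hb hcb hx).tsum_eq]
  refine tsum_congr fun n ↦ ?_
  rw [← mul_assoc, Gamma_mul_Gamma_div_Gamma_mul_ascPochhammer a hb hcb]
  ring

theorem intervalIntegrable_and_integral_le_of_le_Ioo {f g : ℝ → ℝ} {a b : ℝ} (hab : a ≤ b)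
    (hf : AEStronglyMeasurable f (volume.restrict (Ioo a b))) (hg : IntervalIntegrable g volume a b)
    (hf0 : ∀ s ∈ Ioo a b, 0 ≤ f s) (hfg : ∀ s ∈ Ioo a b, f s ≤ g s) :
    IntervalIntegrable f volume a b ∧ ∫ s in a..b, f s ≤ ∫ s in a..b, g s := by
  have hfi : IntervalIntegrable f volume a b := by
    rw [intervalIntegrable_iff_integrableOn_Ioo_of_le hab] at hg ⊢
    refine hg.mono' hf (ae_restrict_of_forall_mem measurableSet_Ioo fun s hs ↦ ?_)
    rw [Real.norm_of_nonneg (hf0 s hs)]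
    exact hfg s hs
  exact ⟨hfi, intervalIntegral.integral_mono_on_of_le_Ioo hab hfi hg hfg⟩

theorem Real.rpow_sub_one_mul_rpow_neg_le {u v α β : ℝ} (hu : 0 < u) (huv : u ≤ v)
    (hβα : β ≤ α) : u ^ (α - 1) * v ^ (-α) ≤ u ^ (β - 1) * v ^ (-β) := by
  have hv := hu.trans_le huv
  have hratio : u ^ (α - β) / v ^ (α - β) ≤ 1 :=
    div_le_one_of_le₀ (Real.rpow_le_rpow hu.le huv (by linarith)) (by positivity)
  calc u ^ (α - 1) * v ^ (-α)
      = u ^ (β - 1) * v ^ (-β) * (u ^ (α - β) / v ^ (α - β)) := by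
        rw [show α - 1 = β - 1 + (α - β) by ring, show -α = -β - (α - β) by ring,
          Real.rpow_add hu, Real.rpow_sub hv]
        ring
    _ ≤ u ^ (β - 1) * v ^ (-β) := mul_le_of_le_one_right (by positivity) hratio

noncomputable def eulerKernelBound (x s : ℝ) : ℝ :=
  s ^ (-(1 / 4) : ℝ) * (1 - s) ^ (-(3 / 4) : ℝ) * (1 - x * s) ^ (-(1 / 4) : ℝ)

theorem norm_eulerKernel_le {a b : ℂ} (ha : 1 / 4 ≤ a.re) (hb : 3 / 4 ≤ b.re) {x s : ℝ}
    (hx : x ∈ Icc (0 : ℝ) 1) (hs : s ∈ Ioo (0 : ℝ) 1) :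
    ‖(s : ℂ) ^ (b - 1) * (1 - (s : ℂ)) ^ (a - 1) * (1 - x * s : ℂ) ^ (-a)‖ ≤
      eulerKernelBound x s := by
  have h1s : 0 < 1 - s := by linarith [hs.2]
  have hxs : 1 - s ≤ 1 - x * s := by nlinarith [hx.2, hs.1]
  have hs_le : s ^ (b.re - 1) ≤ s ^ (-(1 / 4) : ℝ) :=
    Real.rpow_le_rpow_of_exponent_ge hs.1 hs.2.le (by linarith)
  have hrest := Real.rpow_sub_one_mul_rpow_neg_le h1s hxs ha
  rw [show (1 : ℂ) - s = ((1 - s : ℝ) : ℂ) by push_cast; ring,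
    show (1 : ℂ) - x * s = ((1 - x * s : ℝ) : ℂ) by push_cast; ring,
    norm_mul, norm_mul, norm_cpow_eq_rpow_re_of_pos hs.1, norm_cpow_eq_rpow_re_of_pos h1s,
    norm_cpow_eq_rpow_re_of_pos (h1s.trans_le hxs)]
  simp only [sub_re, one_re, neg_re] at hrest ⊢
  rw [eulerKernelBound, mul_assoc, mul_assoc]
  norm_num at hrest ⊢
  exact mul_le_mul hs_le hrest
    (mul_nonneg (Real.rpow_nonneg h1s.le _) (Real.rpow_nonneg (h1s.trans_le hxs).le _))
    (Real.rpow_nonneg hs.1.le _)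

theorem eulerKernelBound_nonneg {x s : ℝ} (hx : x ≤ 1) (hs : s ∈ Ioo (0 : ℝ) 1) :
    0 ≤ eulerKernelBound x s := by
  have : 0 ≤ 1 - x * s := by nlinarith [hs.1, hs.2]
  unfold eulerKernelBound
  have := hs.1.le
  have : 0 ≤ 1 - s := by linarith [hs.2]
  positivity

theorem eulerKernelBound_le_rpow_mul_inv {x s : ℝ} (hx : x ∈ Icc (0 : ℝ) 1)
    (hs : s ∈ Ioo (0 : ℝ) 1) :
    eulerKernelBound x s ≤ s ^ (-(1 / 4) : ℝ) * (1 - s)⁻¹ := by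
  have h1s : 0 < 1 - s := by linarith [hs.2]
  have hxs : 1 - s ≤ 1 - x * s := by nlinarith [hx.2, hs.1]
  have := Real.rpow_sub_one_mul_rpow_neg_le h1s hxs (show (0 : ℝ) ≤ 1 / 4 by norm_num)
  norm_num [Real.rpow_neg_one] at this
  rw [eulerKernelBound, mul_assoc]
  exact mul_le_mul_of_nonneg_left this (Real.rpow_nonneg hs.1.le _)

theorem rpow_neg_quarter_le_two {s : ℝ} (hs : 1 / 2 ≤ s) : s ^ (-(1 / 4) : ℝ) ≤ 2 :=
  calc s ^ (-(1 / 4) : ℝ) ≤ (1 / 2 : ℝ) ^ (-(1 / 4) : ℝ) :=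
        Real.rpow_le_rpow_of_nonpos (by norm_num) hs (by norm_num)
    _ = (2 : ℝ) ^ (1 / 4 : ℝ) := by
        rw [one_div, Real.inv_rpow zero_le_two, ← Real.rpow_neg zero_le_two, neg_neg]
    _ ≤ (2 : ℝ) ^ (1 : ℝ) := Real.rpow_le_rpow_of_exponent_le one_le_two (by norm_num)
    _ = 2 := Real.rpow_one 2

theorem measurable_eulerKernelBound (x : ℝ) : Measurable (eulerKernelBound x) := by
  unfold eulerKernelBound
  fun_prop

theorem eulerKernelBound_integral_le_zero_half {x : ℝ} (hx : x ∈ Icc (0 : ℝ) 1) :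
    IntervalIntegrable (eulerKernelBound x) volume 0 (1 / 2) ∧
      ∫ s in (0 : ℝ)..1 / 2, eulerKernelBound x s ≤ 3 := by
  have hg : IntervalIntegrable (fun s : ℝ ↦ 2 * s ^ (-(1 / 4) : ℝ)) volume 0 (1 / 2) :=
    (intervalIntegral.intervalIntegrable_rpow' (by norm_num)).const_mul 2
  obtain ⟨hint, hle⟩ := intervalIntegrable_and_integral_le_of_le_Ioo (by norm_num)
    (measurable_eulerKernelBound x).aestronglyMeasurable hg
    (fun s hs ↦ eulerKernelBound_nonneg hx.2 ⟨hs.1, by linarith [hs.2]⟩)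
    (fun s hs ↦ by
      have hs' : s ∈ Ioo (0 : ℝ) 1 := ⟨hs.1, by linarith [hs.2]⟩
      refine (eulerKernelBound_le_rpow_mul_inv hx hs').trans ?_
      rw [mul_comm]
      have : (1 - s)⁻¹ ≤ 2 := by rw [inv_le_comm₀ (by linarith [hs'.2]) two_pos]; linarith [hs.2]
      exact mul_le_mul_of_nonneg_right this (Real.rpow_nonneg hs.1.le _))
  refine ⟨hint, hle.trans ?_⟩
  rw [intervalIntegral.integral_const_mul, integral_rpow (Or.inl (by norm_num)),
    Real.zero_rpow (by norm_num)]
  have : (1 / 2 : ℝ) ^ (-(1 / 4) + 1 : ℝ) ≤ 1 :=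
    Real.rpow_le_one (by norm_num) (by norm_num) (by norm_num)
  norm_num at this ⊢
  linarith

theorem eulerKernelBound_integral_le_half_self {x : ℝ} (hx : 1 / 2 ≤ x) (hx1 : x < 1) :
    IntervalIntegrable (eulerKernelBound x) volume (1 / 2) x ∧
      ∫ s in (1 / 2)..x, eulerKernelBound x s ≤ -2 * Real.log (1 - x) := by
  have hg : IntervalIntegrable (fun s : ℝ ↦ 2 * (1 - s)⁻¹) volume (1 / 2) x := by
    refine (ContinuousOn.intervalIntegrable fun s hs ↦ ?_)
    rw [uIcc_of_le hx] at hs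
    have : 1 - s ≠ 0 := by linarith [hs.2]
    fun_prop (disch := assumption)
  obtain ⟨hint, hle⟩ := intervalIntegrable_and_integral_le_of_le_Ioo hx
    (measurable_eulerKernelBound x).aestronglyMeasurable hg
    (fun s hs ↦ eulerKernelBound_nonneg hx1.le ⟨by linarith [hs.1], by linarith [hs.2]⟩)
    (fun s hs ↦ by
      have hs' : s ∈ Ioo (0 : ℝ) 1 := ⟨by linarith [hs.1], by linarith [hs.2]⟩
      refine (eulerKernelBound_le_rpow_mul_inv ⟨by linarith, hx1.le⟩ hs').trans ?_
      exact mul_le_mul_of_nonneg_right (rpow_neg_quarter_le_two hs.1.le)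
        (inv_nonneg.mpr (by linarith [hs'.2])))
  refine ⟨hint, hle.trans ?_⟩
  rw [intervalIntegral.integral_const_mul, intervalIntegral.integral_comp_sub_left (fun u ↦ u⁻¹),
    integral_inv (by rw [mem_uIcc]; rintro (⟨h, -⟩ | ⟨h, -⟩) <;> linarith),
    Real.log_div (by norm_num) (by linarith)]
  have : Real.log (1 - 1 / 2) < 0 := Real.log_neg (by norm_num) (by norm_num)
  linarith

theorem eulerKernelBound_integral_le_self_one {x : ℝ} (hx : 1 / 2 ≤ x) (hx1 : x < 1) :
    IntervalIntegrable (eulerKernelBound x) volume x 1 ∧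
      ∫ s in x..1, eulerKernelBound x s ≤ 8 := by
  have h1x : 0 < 1 - x := by linarith
  have hg : IntervalIntegrable (fun s : ℝ ↦ 2 * (1 - x) ^ (-(1 / 4) : ℝ) * (1 - s) ^ (-(3 / 4) : ℝ))
      volume x 1 := by
    have h := (intervalIntegral.intervalIntegrable_rpow' (a := 0) (b := 1 - x)
      (r := -(3 / 4)) (by norm_num)).comp_sub_left 1
    simp only [sub_zero, sub_sub_cancel] at h
    exact h.symm.const_mul _
  obtain ⟨hint, hle⟩ := intervalIntegrable_and_integral_le_of_le_Ioo hx1.le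
    (measurable_eulerKernelBound x).aestronglyMeasurable hg
    (fun s hs ↦ eulerKernelBound_nonneg hx1.le ⟨by linarith [hs.1], hs.2⟩)
    (fun s hs ↦ by
      have h1s : 0 ≤ 1 - s := by linarith [hs.2]
      have hxs : 1 - x ≤ 1 - x * s := by nlinarith [hs.2]
      have hq : (1 - x * s) ^ (-(1 / 4) : ℝ) ≤ (1 - x) ^ (-(1 / 4) : ℝ) :=
        Real.rpow_le_rpow_of_nonpos h1x hxs (by norm_num)
      rw [eulerKernelBound, mul_right_comm]
      refine mul_le_mul_of_nonneg_right ?_ (Real.rpow_nonneg h1s _)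
      exact mul_le_mul (rpow_neg_quarter_le_two (by linarith [hs.1])) hq
        (Real.rpow_nonneg (by linarith) _) zero_le_two)
  refine ⟨hint, hle.trans (le_of_eq ?_)⟩
  rw [intervalIntegral.integral_const_mul,
    intervalIntegral.integral_comp_sub_left (fun u ↦ u ^ (-(3 / 4) : ℝ)), sub_self,
    integral_rpow (Or.inl (by norm_num)), Real.zero_rpow (by norm_num)]
  rw [show (-(3 / 4) + 1 : ℝ) = 1 / 4 by norm_num, mul_assoc, mul_div_assoc', mul_sub, mul_zero,
    sub_zero, ← Real.rpow_add h1x]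
  norm_num

theorem eulerKernelBound_integral_le {x : ℝ} (hx : 1 / 2 ≤ x) (hx1 : x < 1) :
    IntervalIntegrable (eulerKernelBound x) volume 0 1 ∧
      ∫ s in (0 : ℝ)..1, eulerKernelBound x s ≤ 11 - 2 * Real.log (1 - x) := by
  obtain ⟨hint₁, hle₁⟩ := eulerKernelBound_integral_le_zero_half ⟨by linarith, hx1.le⟩
  obtain ⟨hint₂, hle₂⟩ := eulerKernelBound_integral_le_half_self hx hx1
  obtain ⟨hint₃, hle₃⟩ := eulerKernelBound_integral_le_self_one hx hx1
  refine ⟨(hint₁.trans hint₂).trans hint₃, ?_⟩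
  rw [← intervalIntegral.integral_add_adjacent_intervals (hint₁.trans hint₂) hint₃,
    ← intervalIntegral.integral_add_adjacent_intervals hint₁ hint₂]
  linarith

theorem norm_integral_eulerKernel_le {a b : ℂ} (ha : 1 / 4 ≤ a.re) (hb : 3 / 4 ≤ b.re) {x : ℝ}
    (hx : 1 / 2 ≤ x) (hx1 : x < 1) :
    ‖∫ s in (0 : ℝ)..1, (s : ℂ) ^ (b - 1) * (1 - (s : ℂ)) ^ (a - 1) * (1 - x * s : ℂ) ^ (-a)‖ ≤
      11 - 2 * Real.log (1 - x) := by
  obtain ⟨hint, hle⟩ := eulerKernelBound_integral_le hx hx1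
  refine (intervalIntegral.norm_integral_le_of_norm_le zero_le_one ?_ hint).trans hle
  filter_upwards [(countable_singleton (1 : ℝ)).ae_notMem volume] with s hs1 hs
  exact norm_eulerKernel_le ha hb ⟨by linarith, hx1.le⟩ ⟨hs.1, lt_of_le_of_ne hs.2 hs1⟩

theorem cosh_sq_lt_two {t : ℝ} (ht : |t| ≤ 1 / 2) : Real.cosh t ^ 2 < 2 := by
  have hcosh : Real.cosh (2 * t) ≤ Real.cosh 1 := by
    rw [Real.cosh_le_cosh, abs_mul, abs_two, abs_one]; linarith
  have hcosh1 : Real.cosh 1 < 3 := by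
    rw [Real.cosh_eq]
    have := Real.exp_one_lt_d9
    have : Real.exp (-1) < 1 := Real.exp_lt_one_iff.mpr (by norm_num)
    linarith
  nlinarith [Real.cosh_two_mul t, Real.cosh_sq t]

theorem neg_log_one_sub_inv_cosh_sq_le {t : ℝ} (ht0 : 0 < t) (ht : t ≤ 1 / 2) :
    -Real.log (1 - (Real.cosh t ^ 2)⁻¹) ≤ 4 * Real.log (1 / t) := by
  have hcosh : 0 < Real.cosh t := Real.cosh_pos t
  have hcosh2 : Real.cosh t ≤ 2 := by
    nlinarith [cosh_sq_lt_two (show |t| ≤ 1 / 2 by rwa [abs_of_pos ht0])]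
  have htanh : t / 2 ≤ Real.sinh t / Real.cosh t := by
    rw [div_le_div_iff₀ two_pos hcosh]
    nlinarith [Real.self_le_sinh_iff.mpr ht0.le]
  have hsq : 1 - (Real.cosh t ^ 2)⁻¹ = (Real.sinh t / Real.cosh t) ^ 2 := by
    field_simp
    linarith [Real.cosh_sq t]
  have hlog2 : Real.log 2 ≤ Real.log (1 / t) :=
    Real.log_le_log two_pos (by rw [le_div_iff₀ ht0]; linarith)
  calc -Real.log (1 - (Real.cosh t ^ 2)⁻¹) = -2 * Real.log (Real.sinh t / Real.cosh t) := by
        rw [hsq, Real.log_pow]; push_cast; ring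
    _ ≤ -2 * Real.log (t / 2) := by
        linarith [Real.log_le_log (by positivity) htanh]
    _ = 2 * Real.log 2 + 2 * Real.log (1 / t) := by
        rw [Real.log_div ht0.ne' two_ne_zero, one_div, Real.log_inv]; ring
    _ ≤ 4 * Real.log (1 / t) := by linarith

theorem norm_two_cpow_mul_cpow_le_one {l : ℂ} (hl : 0 ≤ l.im) {y : ℝ} (hy : 2 ≤ y) :
    ‖(2 : ℂ) ^ (-(3 / 2) - I * l) * (y : ℂ) ^ (I * l - 1 / 2)‖ ≤ 1 := by
  have hnorm₁ : ‖(2 : ℂ) ^ (-(3 / 2) - I * l)‖ = (2 : ℝ) ^ (l.im - 3 / 2) := by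
    rw [← ofReal_ofNat, norm_cpow_eq_rpow_re_of_pos two_pos]
    simp only [sub_re, neg_re, mul_re, I_re, I_im]
    norm_num
    ring_nf
  have hnorm₂ : ‖(y : ℂ) ^ (I * l - 1 / 2)‖ = y ^ (-l.im - 1 / 2) := by
    rw [norm_cpow_eq_rpow_re_of_pos (by linarith)]
    simp
  rw [norm_mul, hnorm₁, hnorm₂]
  calc (2 : ℝ) ^ (l.im - 3 / 2) * y ^ (-l.im - 1 / 2)
      ≤ (2 : ℝ) ^ (l.im - 3 / 2) * (2 : ℝ) ^ (-l.im - 1 / 2) := by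
        gcongr _ * ?_
        exact Real.rpow_le_rpow_of_nonpos two_pos hy (by linarith)
    _ = (2 : ℝ) ^ (-2 : ℝ) := by rw [← Real.rpow_add two_pos]; congr 1; ring
    _ ≤ 1 := Real.rpow_le_one_of_one_le_of_nonpos one_le_two (by norm_num)

theorem bfun_one_zero_eq (l : ℂ) (t : ℝ) :
    bfun 1 0 l t = (2 : ℂ) ^ (-(3 / 2) - I * l) * ((2 * Real.cosh t : ℝ) : ℂ) ^ (I * l - 1 / 2) *
      (Gamma (3 / 4 - I * l / 2) * Gamma ((1 / 2 - I * l) / 2) / Gamma (1 - I * l) *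
        hyp ((1 / 2 - I * l) / 2) (3 / 4 - I * l / 2) (1 - I * l) ((Real.cosh t ^ 2)⁻¹ : ℝ)) := by
  have hrho : ((rho 1 0 : ℝ) : ℂ) = 1 / 2 := by norm_num [rho]
  simp only [bfun, Phi, hrho, Nat.cast_one, Nat.cast_zero, ofReal_inv]
  norm_num
  ring_nf

theorem stmt1 :
    ∃ C : ℝ, 0 < C ∧
      ∀ l : ℂ, 0 < l.im → ∀ t ∈ Set.Ioc (0 : ℝ) (1 / 2),
        ‖bfun 1 0 l t‖ ≤ C * Real.log (1 / t) := by
  refine ⟨24, by norm_num, fun l hl t ⟨ht0, ht2⟩ ↦ ?_⟩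
  have hlog := neg_log_one_sub_inv_cosh_sq_le ht0 ht2
  have hlog2 : Real.log 2 ≤ Real.log (1 / t) :=
    Real.log_le_log two_pos (by rw [le_div_iff₀ ht0]; linarith)
  have hcosh : 1 < Real.cosh t := Real.one_lt_cosh.mpr ht0.ne'
  have hx : 1 / 2 ≤ (Real.cosh t ^ 2)⁻¹ := by
    rw [one_div]
    exact inv_anti₀ (by positivity) (cosh_sq_lt_two (by rwa [abs_of_pos ht0])).le
  have hx1 : (Real.cosh t ^ 2)⁻¹ < 1 := inv_lt_one_of_one_lt₀ (by nlinarith)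
  have hcb : (1 - I * l) - (3 / 4 - I * l / 2) = (1 / 2 - I * l) / 2 := by ring
  have ha : 1 / 4 ≤ ((1 / 2 - I * l) / 2).re := by simp; linarith
  have hb : 3 / 4 ≤ (3 / 4 - I * l / 2).re := by simp; linarith
  have hEuler := Gamma_mul_Gamma_div_Gamma_mul_hyp_eq_integral ((1 / 2 - I * l) / 2)
    (by linarith) (by rw [hcb]; linarith)
    (x := ((Real.cosh t ^ 2)⁻¹ : ℝ))
    (by rw [norm_real, Real.norm_of_nonneg (by positivity)]; exact hx1)
  rw [hcb] at hEuler
  rw [bfun_one_zero_eq, hEuler, norm_mul]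
  calc _ ≤ 1 * (11 - 2 * Real.log (1 - (Real.cosh t ^ 2)⁻¹)) :=
        mul_le_mul (norm_two_cpow_mul_cpow_le_one hl.le (by linarith))
          (norm_integral_eulerKernel_le ha hb hx hx1) (norm_nonneg _) zero_le_one
    _ ≤ 24 * Real.log (1 / t) := by linarith [Real.log_two_gt_d9]

end
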